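/- Define g₃ : [0,1] → ℝ by g₃(z) = (−z² + 16z − 3 + √(49−z)·(1−z)^{3/2}) / (2(z+5)). Then g₃ takes values in [0,1], and for every z ∈ [0,1] it satisfies the functional equation g₃(z) = (1/4)·(1+z)·(1 + g₃(g₃(z))). -/

import Mathlib

/-!
Squaring away the radical shows that `w = g₃ z` is the larger root in `w` of the symmetric
relation `g3Curve z w = 0`. For fixed `w`, the roots of `g3Curve w ·` are `z` and, by Vieta,
`u = (4w - 1 - z) / (1 + z)`. Since `g₃ z ≥ (1 + z)² / 4` we get `u ≥ z`, so `u` is the larger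
root, i.e. `g₃ w = u`, which is the functional equation.
-/

namespace VEP

/-- The generating function `g₃` for the incomplete binary tree model with natural embedding:
`g₃(z) = (−z² + 16z − 3 + √(49−z)(1−z)^{3/2}) / (2(z+5))`. -/
noncomputable def g3 (z : ℝ) : ℝ :=
  (-z ^ 2 + 16 * z - 3 + Real.sqrt (49 - z) * (1 - z) ^ ((3 : ℝ) / 2)) / (2 * (z + 5))

def g3Curve (z w : ℝ) : ℝ :=
  z * w * (z + w) + 5 * (z ^ 2 + w ^ 2) - 16 * z * w + 3 * (z + w) - 2

section

variable {z w u : ℝ}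

lemma g3Curve_eq_sq_sub (h5 : z + 5 ≠ 0) :
    g3Curve z w =
      ((2 * (z + 5) * w - (-z ^ 2 + 16 * z - 3)) ^ 2 - (1 - z) ^ 3 * (49 - z)) / (4 * (z + 5)) := by
  rw [g3Curve, eq_div_iff (by positivity)]
  ring

lemma two_mul_add_five_mul_g3 (h1 : z ≤ 1) (h5 : z + 5 ≠ 0) :
    2 * (z + 5) * g3 z = -z ^ 2 + 16 * z - 3 + (1 - z) * √((49 - z) * (1 - z)) := by
  have h1z : 0 ≤ 1 - z := by linarith
  have hpow : √(49 - z) * (1 - z) ^ ((3 : ℝ) / 2) = (1 - z) * √((49 - z) * (1 - z)) := by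
    rw [show (3 : ℝ) / 2 = 1 + 1 / 2 by norm_num, Real.rpow_add' h1z (by norm_num),
      Real.rpow_one, ← Real.sqrt_eq_rpow, Real.sqrt_mul (by linarith)]
    ring
  rw [g3, hpow]
  field_simp

lemma g3Curve_g3 (h1 : z ≤ 1) (h5 : -5 < z) : g3Curve z (g3 z) = 0 := by
  have hs : √((49 - z) * (1 - z)) ^ 2 = (49 - z) * (1 - z) := Real.sq_sqrt (by nlinarith)
  rw [g3Curve_eq_sq_sub (by linarith), two_mul_add_five_mul_g3 h1 (by linarith),
    add_sub_cancel_left, mul_pow, hs]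
  ring

lemma eq_g3_of_g3Curve (h1 : z ≤ 1) (h5 : -5 < z) (hw : g3Curve z w = 0)
    (hlarger : -z ^ 2 + 16 * z - 3 ≤ 2 * (z + 5) * w) : w = g3 z := by
  set s := √((49 - z) * (1 - z))
  have hs : s ^ 2 = (49 - z) * (1 - z) := Real.sq_sqrt (by nlinarith)
  have hsq : (2 * (z + 5) * w - (-z ^ 2 + 16 * z - 3)) ^ 2 = ((1 - z) * s) ^ 2 := by
    rw [g3Curve_eq_sq_sub (by linarith), div_eq_zero_iff] at hw
    rcases hw with hw | hw
    · rw [mul_pow, hs]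
      linear_combination hw
    · linarith
  have hroot : 2 * (z + 5) * w - (-z ^ 2 + 16 * z - 3) = (1 - z) * s :=
    (pow_left_inj₀ (by linarith) (mul_nonneg (by linarith) (Real.sqrt_nonneg _)) two_ne_zero).1 hsq
  have hz5 : 2 * (z + 5) ≠ 0 := by linarith
  apply mul_left_cancel₀ hz5
  rw [two_mul_add_five_mul_g3 h1 (by linarith)]
  linarith

lemma sq_div_four_le_g3 (hz : z ∈ Set.Icc (0 : ℝ) 1) : (1 + z) ^ 2 / 4 ≤ g3 z := by
  obtain ⟨h0, h1⟩ := hz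
  have hs : 7 * (1 - z) ≤ √((49 - z) * (1 - z)) :=
    Real.le_sqrt_of_sq_le (by nlinarith [mul_nonneg h0 (sub_nonneg.2 h1)])
  have hw := two_mul_add_five_mul_g3 h1 (by linarith)
  -- `hs` gives `2 (z + 5) g3 z ≥ 6z² + 2z + 4 = 2 (z + 5) (1 + z)² / 4 + (1 - z)² (3 - z) / 2`.
  nlinarith [mul_le_mul_of_nonneg_left hs (sub_nonneg.2 h1), mul_nonneg (sq_nonneg (1 - z)) h0]

lemma g3_le_one (hz : z ∈ Set.Icc (0 : ℝ) 1) : g3 z ≤ 1 := by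
  obtain ⟨h0, h1⟩ := hz
  have hs : √((49 - z) * (1 - z)) ≤ 7 :=
    Real.sqrt_le_iff.2 ⟨by norm_num, by nlinarith⟩
  have hw := two_mul_add_five_mul_g3 h1 (by linarith)
  nlinarith [mul_le_mul_of_nonneg_left hs (sub_nonneg.2 h1),
    mul_nonneg (sub_nonneg.2 h1) (show (0 : ℝ) ≤ 6 - z by linarith)]

lemma g3_mem_Icc (hz : z ∈ Set.Icc (0 : ℝ) 1) : g3 z ∈ Set.Icc (0 : ℝ) 1 :=
  ⟨le_trans (by positivity) (sq_div_four_le_g3 hz), g3_le_one hz⟩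

lemma g3Curve_of_mul_eq (hz : 1 + z ≠ 0) (hw : g3Curve z w = 0)
    (hu : (1 + z) * u = 4 * w - 1 - z) : g3Curve w u = 0 := by
  have h : (1 + z) * g3Curve w u = 0 := by
    unfold g3Curve at hw ⊢
    linear_combination (1 + u) * hw + (u - z) * (w + 5) * hu
  simpa [hz] using h

lemma two_mul_add_five_mul_ge_of_mul_eq (hz : 1 + z ≠ 0) (hw : g3Curve z w = 0)
    (hu : (1 + z) * u = 4 * w - 1 - z) (hzu : z ≤ u) (h5 : -5 < w) :
    -w ^ 2 + 16 * w - 3 ≤ 2 * (w + 5) * u := by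
  -- Vieta: the roots `z` and `u` of `g3Curve w ·` have sum `(-w ^ 2 + 16 * w - 3) / (w + 5)`.
  have hvieta : (1 + z) * (2 * (w + 5) * u - (-w ^ 2 + 16 * w - 3)) =
      (1 + z) * ((w + 5) * (u - z)) := by
    unfold g3Curve at hw
    linear_combination hw + (w + 5) * hu
  have := mul_nonneg (by linarith : (0 : ℝ) ≤ w + 5) (sub_nonneg.2 hzu)
  linarith [mul_left_cancel₀ hz hvieta]

lemma one_add_mul_g3_g3 (hz : z ∈ Set.Icc (0 : ℝ) 1) :
    (1 + z) * g3 (g3 z) = 4 * g3 z - 1 - z := by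
  obtain ⟨h0, h1⟩ := id hz
  obtain ⟨hw0, hw1⟩ := g3_mem_Icc hz
  have hz1 : 1 + z ≠ 0 := by linarith
  have hu : (1 + z) * ((4 * g3 z - 1 - z) / (1 + z)) = 4 * g3 z - 1 - z := mul_div_cancel₀ _ hz1
  have hzu : z ≤ (4 * g3 z - 1 - z) / (1 + z) := by
    rw [le_div_iff₀ (by linarith)]
    linarith [sq_div_four_le_g3 hz]
  have hR := g3Curve_g3 h1 (by linarith)
  rwa [← eq_g3_of_g3Curve hw1 (by linarith) (g3Curve_of_mul_eq hz1 hR hu)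
    (two_mul_add_five_mul_ge_of_mul_eq hz1 hR hu hzu (by linarith))]

end

/-- `g₃` maps `[0,1]` into `[0,1]` and satisfies `g₃(z) = ¼(1+z)(1 + g₃(g₃(z)))` there. -/
theorem g3_functional_equation :
    (∀ z ∈ Set.Icc (0 : ℝ) 1, g3 z ∈ Set.Icc (0 : ℝ) 1) ∧
    (∀ z ∈ Set.Icc (0 : ℝ) 1, g3 z = (1 / 4) * (1 + z) * (1 + g3 (g3 z))) :=
  ⟨fun _ hz => g3_mem_Icc hz, fun z hz => by linear_combination (-1 / 4 : ℝ) * one_add_mul_g3_g3 hz⟩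

end VEP
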